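/- Let E ∈ ℝ^{p×n} have full column rank, A, B ∈ ℝ^{n×n}, and define à := EA(EᵀE)⁻¹Eᵀ, B̃ := EB(EᵀE)⁻¹Eᵀ, M := I - E(EᵀE)⁻¹Eᵀ. Suppose there exist a symmetric positive definite Q̃ ∈ ℝ^{p×p}, Z̃ ∈ ℝ^{p×p}, and ρ ∈ ℝ such that Q̃Ãᵀ + ÃQ̃ + Z̃ᵀB̃ᵀ + B̃Z̃ + ρ Q̃MQ̃ ≺ 0. Then K := (EᵀE)⁻¹Eᵀ(Z̃Q̃⁻¹)E and P := EᵀQ̃⁻¹E satisfy P ≻ 0 and (A+BK)ᵀP + P(A+BK) ≺ 0. -/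

import Mathlib

/-!
Put `W := Q̃⁻¹ E`, so that `Q̃ W = E` and `P = Wᵀ Q̃ W`. Since `L := (EᵀE)⁻¹Eᵀ` is a left inverse
of `E`, we get `ÃQ̃W = EA`, `B̃Z̃W = EBK` and `Q̃MQ̃W = Q̃(1 - EL)E = 0`; hence congruence by `W`
turns the LMI matrix into the closed-loop Lyapunov matrix `(A + BK)ᵀP + P(A + BK)`. Full column
rank makes `W` injective, and congruence by an injective matrix preserves positive definiteness.
-/

open Matrix

namespace Matrix

variable {m n : Type*}

lemma mulVec_injective_of_rank_eq_card [Fintype n] {K : Type*} [Field K] {E : Matrix m n K}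
    (hE : E.rank = Fintype.card n) : Function.Injective E.mulVec :=
  mulVec_injective_iff.mpr <| linearIndependent_iff_card_eq_finrank_span.mpr <|
    hE.symm.trans E.rank_eq_finrank_span_cols

lemma isUnit_transpose_mul_self_of_rank_eq_card [Fintype m] [Fintype n] [DecidableEq n]
    {K : Type*} [Field K] [LinearOrder K] [IsStrictOrderedRing K] {E : Matrix m n K}
    (hE : E.rank = Fintype.card n) : IsUnit (Eᵀ * E) :=
  mulVec_injective_iff_isUnit.mp <|
    mulVec_injective_of_rank_eq_card (by rw [rank_transpose_mul_self, hE])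

lemma PosDef.transpose_mul_mul_same [Fintype m] [Fintype n] {R : Type*} [Ring R]
    [PartialOrder R] [StarRing R] [TrivialStar R] {A : Matrix n n R} {B : Matrix n m R}
    (hA : A.PosDef) (hB : Function.Injective B.mulVec) : (Bᵀ * A * B).PosDef := by
  simpa only [conjTranspose_eq_transpose_of_trivial] using hA.conjTranspose_mul_mul_same hB

section Congruence

variable {R : Type*} [CommRing R]

lemma transpose_mul_mul_of_mul_eq [Fintype m] [Fintype n] {E W : Matrix m n R}
    {X : Matrix m m R} {Y : Matrix n n R} (h : X * W = E * Y) : Wᵀ * X * W = Wᵀ * E * Y := by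
  rw [Matrix.mul_assoc, h, Matrix.mul_assoc]

lemma transpose_mul_transpose_mul_of_mul_eq [Fintype m] [Fintype n] {E W : Matrix m n R}
    {X : Matrix m m R} {Y : Matrix n n R} (h : X * W = E * Y) :
    Wᵀ * Xᵀ * W = Yᵀ * (Wᵀ * E)ᵀ := by
  simpa only [transpose_mul, transpose_transpose, Matrix.mul_assoc] using
    congrArg transpose (transpose_mul_mul_of_mul_eq h)

lemma inv_mul_transpose_mul_mul_inv_mul [Fintype m] [DecidableEq m] {E : Matrix m n R}
    {Q : Matrix m m R} (hQ : Qᵀ = Q) (hQQ : Q * Q⁻¹ = 1) :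
    (Q⁻¹ * E)ᵀ * Q * (Q⁻¹ * E) = Eᵀ * Q⁻¹ * E := by
  rw [transpose_mul, transpose_nonsing_inv, hQ, Matrix.mul_assoc _ Q, ← Matrix.mul_assoc Q, hQQ,
    Matrix.one_mul, Matrix.mul_assoc]

lemma transpose_mul_lmi_mul_eq_lyapunov [Fintype m] [Fintype n] [DecidableEq m]
    [DecidableEq n] {E : Matrix m n R} {L : Matrix n m R} {Q : Matrix m m R} (hL : L * E = 1)
    (hQ : Qᵀ = Q) (hQQ : Q * Q⁻¹ = 1) (A B : Matrix n n R) (Z : Matrix m m R) (ρ : R) :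
    (Q⁻¹ * E)ᵀ * (Q * (E * A * L)ᵀ + E * A * L * Q + Zᵀ * (E * B * L)ᵀ + E * B * L * Z +
        ρ • (Q * (1 - E * L) * Q)) * (Q⁻¹ * E) =
      (A + B * (L * (Z * Q⁻¹) * E))ᵀ * (Eᵀ * Q⁻¹ * E) +
        Eᵀ * Q⁻¹ * E * (A + B * (L * (Z * Q⁻¹) * E)) := by
  set W := Q⁻¹ * E
  set K := L * (Z * Q⁻¹) * E
  have hWE : Wᵀ * E = Eᵀ * Q⁻¹ * E := by rw [transpose_mul, transpose_nonsing_inv, hQ]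
  have hP : (Eᵀ * Q⁻¹ * E)ᵀ = Eᵀ * Q⁻¹ * E := by
    rw [transpose_mul, transpose_mul, transpose_nonsing_inv, hQ, transpose_transpose,
      Matrix.mul_assoc]
  have hQW : Q * W = E := by rw [← Matrix.mul_assoc, hQQ, Matrix.one_mul]
  have hA : E * A * L * Q * W = E * A := by
    rw [Matrix.mul_assoc _ Q, hQW, Matrix.mul_assoc _ L, hL, Matrix.mul_one]
  have hB : E * B * L * Z * W = E * (B * K) := by simp only [W, K, Matrix.mul_assoc]
  have hM : Q * (1 - E * L) * Q * W = E * (0 : Matrix n n R) := by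
    rw [Matrix.mul_assoc _ Q, hQW, Matrix.mul_assoc, Matrix.sub_mul, Matrix.mul_assoc, hL]
    simp
  rw [show Q * (E * A * L)ᵀ = (E * A * L * Q)ᵀ by rw [transpose_mul _ Q, hQ],
    ← transpose_mul]
  simp only [Matrix.add_mul, Matrix.mul_add, Matrix.smul_mul, Matrix.mul_smul]
  rw [transpose_mul_transpose_mul_of_mul_eq hA, transpose_mul_mul_of_mul_eq hA,
    transpose_mul_transpose_mul_of_mul_eq hB, transpose_mul_mul_of_mul_eq hB,
    transpose_mul_mul_of_mul_eq hM, hWE, hP, transpose_add]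
  simp only [Matrix.mul_zero, smul_zero, add_zero, Matrix.add_mul]
  abel

end Congruence

end Matrix

theorem stmt_16 (p n : ℕ) (E : Matrix (Fin p) (Fin n) ℝ)
    (hE : E.rank = n) (A B : Matrix (Fin n) (Fin n) ℝ)
    (Qt Zt : Matrix (Fin p) (Fin p) ℝ) (hQt : Qt.PosDef) (ρ : ℝ)
    (hLMI :
      letI At : Matrix (Fin p) (Fin p) ℝ := E * A * (Eᵀ * E)⁻¹ * Eᵀ
      letI Bt : Matrix (Fin p) (Fin p) ℝ := E * B * (Eᵀ * E)⁻¹ * Eᵀ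
      letI M : Matrix (Fin p) (Fin p) ℝ := 1 - E * (Eᵀ * E)⁻¹ * Eᵀ
      (-(Qt * Atᵀ + At * Qt + Ztᵀ * Btᵀ + Bt * Zt + ρ • (Qt * M * Qt))).PosDef) :
    letI K : Matrix (Fin n) (Fin n) ℝ := (Eᵀ * E)⁻¹ * Eᵀ * (Zt * Qt⁻¹) * E
    letI P : Matrix (Fin n) (Fin n) ℝ := Eᵀ * Qt⁻¹ * E
    P.PosDef ∧ (-((A + B * K)ᵀ * P + P * (A + B * K))).PosDef := by
  have hE' : E.rank = Fintype.card (Fin n) := by rw [hE, Fintype.card_fin]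
  have hL : (Eᵀ * E)⁻¹ * Eᵀ * E = 1 := by
    rw [Matrix.mul_assoc, nonsing_inv_mul _
      ((isUnit_iff_isUnit_det _).mp (isUnit_transpose_mul_self_of_rank_eq_card hE'))]
  have hQ : Qtᵀ = Qt := by
    simpa only [conjTranspose_eq_transpose_of_trivial] using hQt.isHermitian.eq
  have hQQ : Qt * Qt⁻¹ = 1 := mul_nonsing_inv _ ((isUnit_iff_isUnit_det _).mp hQt.isUnit)
  have hW : Function.Injective (Qt⁻¹ * E).mulVec := fun x y hxy =>
    mulVec_injective_of_rank_eq_card hE' <| mulVec_injective_of_isUnit hQt.inv.isUnit <| by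
      simpa only [mulVec_mulVec] using hxy
  refine ⟨?_, ?_⟩
  · rw [← inv_mul_transpose_mul_mul_inv_mul hQ hQQ]
    exact hQt.transpose_mul_mul_same hW
  · convert hLMI.transpose_mul_mul_same hW using 1
    rw [Matrix.mul_neg, Matrix.neg_mul, neg_inj]
    simpa only [Matrix.mul_assoc] using (transpose_mul_lmi_mul_eq_lyapunov hL hQ hQQ A B Zt ρ).symm
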